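/- arXiv:1110.6801 — 7 statements merged into one kernel-verified Lean document; each statement's English description precedes it below -/
import Mathlib

section
/- Let ζ be a primitive 42nd root of unity, K = ℚ(ζ), and 𝒪_K its ring of integers. Set π₁ = −ζ⁸ + ζ⁶ − ζ⁴ + ζ and π₂ = ζ⁹ + ζ⁸ + ζ⁴ + ζ³ − ζ − 1. Then the principal ideals (π₁) and (π₂) are distinct prime (maximal) ideals of 𝒪_K, and the ideal (7) factors as (7) = (π₁)⁶(π₂)⁶. -/
/-!
With `η = ζ ^ 6`, a primitive 7th root of unity, one has `π₁ π₂ = -ζ ^ 2 (η ^ 4 - 1)`, so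
`(π₁ π₂) ^ 6` is associated to `(η - 1) ^ 6`, which is associated to `7`.
Modulo 7 the root `ζ` may be sent to either primitive 6th root of unity `3`, `5` of `𝔽₇`;
`π₁` vanishes at `5` and `π₂` at `3`, so neither is a unit, and `N(π₁) ^ 6 N(π₂) ^ 6 = 7 ^ 12`
forces both norms to be the prime `7`, so both ideals are maximal. Since `π₁` does not vanish
at `3`, the two primes differ.
-/

open NumberField Polynomial

theorem Nat.eq_and_eq_of_mul_eq_sq_of_ne_one {p a b : ℕ} (hp : p.Prime) (hab : a * b = p ^ 2)
    (ha : a ≠ 1) (hb : b ≠ 1) : a = p ∧ b = p := by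
  obtain ⟨i, -, rfl⟩ := (Nat.dvd_prime_pow hp).1 (Dvd.intro b hab)
  obtain ⟨j, -, rfl⟩ := (Nat.dvd_prime_pow hp).1 (Dvd.intro_left _ hab)
  rw [← pow_add] at hab
  have hij := Nat.pow_right_injective hp.two_le hab
  have hi : i ≠ 0 := by rintro rfl; exact ha (pow_zero p)
  have hj : j ≠ 0 := by rintro rfl; exact hb (pow_zero p)
  obtain ⟨rfl, rfl⟩ : i = 1 ∧ j = 1 := by omega
  simp

namespace IsPrimitiveRoot

theorem associated_natCast_sub_one_pow {A : Type*} [CommRing A] [IsDomain A]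
    {p : ℕ} (hp : p.Prime) {η : A} (hη : IsPrimitiveRoot η p) :
    Associated (p : A) ((η - 1) ^ (p - 1)) := by
  obtain ⟨m, rfl⟩ : ∃ m, p = m + 1 := ⟨p - 1, by have := hp.pos; omega⟩
  have hfactor : ∀ k ∈ Finset.range m, Associated (η - 1) (η ^ (k + 1) - 1) := fun k hk =>
    hη.associated_sub_one_pow_sub_one_of_coprime
      (Nat.coprime_of_lt_prime k.succ_ne_zero (by simpa using hk) hp).symm
  have hprod := Associated.prod _ _ _ hfactor
  rw [Finset.prod_const, Finset.card_range] at hprod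
  push_cast
  rw [← hη.prod_pow_sub_one_eq_order]
  exact (associated_unit_mul_left _ _ (isUnit_neg_one.pow m)).trans hprod.symm

theorem exists_ringHom_ringOfIntegers_eq {K : Type*} [Field K] [CharZero K]
    {n : ℕ} [NeZero n] [IsCyclotomicExtension {n} ℚ K] {ζ : 𝓞 K} (hζ : IsPrimitiveRoot ζ n)
    {R : Type*} [CommRing R] {x : R} (hx : (cyclotomic n R).IsRoot x) :
    ∃ f : 𝓞 K →+* R, f ζ = x := by
  have hζK : IsPrimitiveRoot (ζ : K) n := hζ.map_of_injective RingOfIntegers.coe_injective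
  have hmin : minpoly ℤ hζK.integralPowerBasis.gen = cyclotomic n ℤ := by
    rw [integralPowerBasis_gen, toInteger_coe,
      ← minpoly.algebraMap_eq RingOfIntegers.coe_injective,
      cyclotomic_eq_minpoly hζK (NeZero.pos n)]
  have hx' : aeval x (minpoly ℤ hζK.integralPowerBasis.gen) = 0 := by
    rwa [hmin, aeval_def, eval₂_eq_eval_map, map_cyclotomic]
  refine ⟨(hζK.integralPowerBasis.lift x hx').toRingHom, ?_⟩
  simpa using hζK.integralPowerBasis.lift_gen x hx'

end IsPrimitiveRoot

namespace Ideal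

theorem span_singleton_ne_of_map_eq_zero {S R : Type*} [CommRing S] [CommRing R] (f : S →+* R)
    {a b : S} (ha : f a ≠ 0) (hb : f b = 0) : span {a} ≠ span {b} := by
  intro h
  obtain ⟨c, rfl⟩ := mem_span_singleton.1 (h ▸ mem_span_singleton_self a)
  rw [map_mul, hb, zero_mul] at ha
  exact ha rfl

variable {S : Type*} [CommRing S] [IsDedekindDomain S] [Module.Free ℤ S]

theorem absNorm_span_singleton_ne_one_of_map_eq_zero {R : Type*} [CommRing R] [Nontrivial R]
    (f : S →+* R) {x : S} (hx : f x = 0) : absNorm (span {x}) ≠ 1 := by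
  rw [Ne, absNorm_eq_one_iff, span_singleton_eq_top]
  intro hu
  simpa [hx] using hu.map f

variable [Module.Finite ℤ S]

theorem isMaximal_of_prime_absNorm {I : Ideal S} (hI : (absNorm I).Prime) : I.IsMaximal :=
  (isPrime_of_irreducible_absNorm hI).isMaximal fun h => by
    rw [h, absNorm_bot] at hI
    exact Nat.not_prime_zero hI

theorem absNorm_eq_of_span_natCast_eq_pow_mul_pow {p e : ℕ} (hp : p.Prime) (he : e ≠ 0)
    (hS : Module.finrank ℤ S = 2 * e) {I J : Ideal S} (h : span {(p : S)} = I ^ e * J ^ e)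
    (hI : absNorm I ≠ 1) (hJ : absNorm J ≠ 1) : absNorm I = p ∧ absNorm J = p := by
  have hnorm := congrArg absNorm h
  rw [absNorm_span_natCast, hS, map_mul, map_pow, map_pow, ← mul_pow, pow_mul] at hnorm
  exact Nat.eq_and_eq_of_mul_eq_sq_of_ne_one hp (Nat.pow_left_injective he hnorm).symm hI hJ

end Ideal

theorem IsPrimitiveRoot.cyclotomic42_relation {A : Type*} [CommRing A] [IsDomain A] {ζ : A}
    (hζ : IsPrimitiveRoot ζ 42) :
    ζ ^ 12 + ζ ^ 11 - ζ ^ 9 - ζ ^ 8 + ζ ^ 6 - ζ ^ 4 - ζ ^ 3 + ζ + 1 = 0 := by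
  have h2 : ζ ^ 21 = -1 :=
    (hζ.pow_of_dvd (p := 21) (by norm_num) (by norm_num)).eq_neg_one_of_two_right
  have h3 := (hζ.pow_of_dvd (p := 14) (by norm_num) (by norm_num)).geom_sum_eq_zero (by norm_num)
  have h7 := (hζ.pow_of_dvd (p := 6) (by norm_num) (by norm_num)).geom_sum_eq_zero (by norm_num)
  simp only [Finset.sum_range_succ, Finset.sum_range_zero] at h3 h7
  linear_combination (-ζ ^ 8 + ζ ^ 10 + ζ ^ 11 + ζ ^ 16 + ζ ^ 17 + ζ ^ 22 + ζ ^ 23 + ζ ^ 29) * h2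
      + (ζ - ζ ^ 3 - ζ ^ 4 - ζ ^ 9 - ζ ^ 10 - ζ ^ 15 - ζ ^ 16 - ζ ^ 22) * h3 + h7

theorem IsPrimitiveRoot.associated_seven_cyclotomic42 {A : Type*} [CommRing A] [IsDomain A]
    {ζ : A} (hζ : IsPrimitiveRoot ζ 42) :
    Associated (7 : A)
      (((-ζ ^ 8 + ζ ^ 6 - ζ ^ 4 + ζ) * (ζ ^ 9 + ζ ^ 8 + ζ ^ 4 + ζ ^ 3 - ζ - 1)) ^ 6) := by
  have hη : IsPrimitiveRoot (ζ ^ 6) 7 := hζ.pow_of_dvd (by norm_num) (by norm_num)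
  have hprod : (-ζ ^ 8 + ζ ^ 6 - ζ ^ 4 + ζ) * (ζ ^ 9 + ζ ^ 8 + ζ ^ 4 + ζ ^ 3 - ζ - 1) =
      -ζ ^ 2 * ((ζ ^ 6) ^ 4 - 1) := by
    linear_combination (-ζ - ζ ^ 2 + ζ ^ 3 - ζ ^ 6 + ζ ^ 7 + ζ ^ 12 - ζ ^ 13 + ζ ^ 14) *
      hζ.cyclotomic42_relation
  refine (hη.associated_natCast_sub_one_pow (by norm_num)).trans (Associated.pow_pow ?_)
  rw [hprod]
  exact (hη.associated_sub_one_pow_sub_one_of_coprime (j := 4) (by norm_num)).trans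
    (associated_unit_mul_left _ _ ((hζ.isUnit (by norm_num)).pow 2).neg).symm

theorem ZMod.isPrimitiveRoot_three_six : IsPrimitiveRoot (3 : ZMod 7) 6 :=
  .mk_of_lt _ (by norm_num) (by decide) fun l _ hl => by interval_cases l <;> decide

theorem ZMod.isPrimitiveRoot_five_six : IsPrimitiveRoot (5 : ZMod 7) 6 :=
  .mk_of_lt _ (by norm_num) (by decide) fun l _ hl => by interval_cases l <;> decide

/-- In characteristic 7, `Φ₄₂ = Φ₆ ^ 6`. -/
theorem IsPrimitiveRoot.exists_ringHom_zmod_seven {K : Type*} [Field K] [CharZero K]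
    [IsCyclotomicExtension {42} ℚ K] {ζ : 𝓞 K} (hζ : IsPrimitiveRoot ζ 42) {x : ZMod 7}
    (hx : IsPrimitiveRoot x 6) : ∃ f : 𝓞 K →+* ZMod 7, f ζ = x :=
  have : NeZero ((6 : ℕ) : ZMod 7) := ⟨by decide⟩
  have : Fact (Nat.Prime 7) := ⟨by norm_num⟩
  hζ.exists_ringHom_ringOfIntegers_eq
    ((isRoot_cyclotomic_prime_pow_mul_iff_of_charP (p := 7) (k := 1)).2 hx)

theorem factorization_of_seven_in_cyclotomic42
    (K : Type*) [Field K] [NumberField K]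
    [IsCyclotomicExtension {(42 : ℕ)} ℚ K]
    (ζ : 𝓞 K) (hζ : IsPrimitiveRoot ζ 42)
    (π₁ π₂ : 𝓞 K)
    (hπ₁ : π₁ = -ζ ^ 8 + ζ ^ 6 - ζ ^ 4 + ζ)
    (hπ₂ : π₂ = ζ ^ 9 + ζ ^ 8 + ζ ^ 4 + ζ ^ 3 - ζ - 1) :
    Ideal.span {π₁} ≠ Ideal.span {π₂} ∧
    (Ideal.span {π₁}).IsMaximal ∧ (Ideal.span {π₂}).IsMaximal ∧
    Ideal.span {(7 : 𝓞 K)} = Ideal.span {π₁} ^ 6 * Ideal.span {π₂} ^ 6 := by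
  have hassoc : Associated (7 : 𝓞 K) ((π₁ * π₂) ^ 6) :=
    hπ₁ ▸ hπ₂ ▸ hζ.associated_seven_cyclotomic42
  have hspan : Ideal.span {(7 : 𝓞 K)} = Ideal.span {π₁} ^ 6 * Ideal.span {π₂} ^ 6 := by
    rw [Ideal.span_singleton_pow, Ideal.span_singleton_pow,
      Ideal.span_singleton_mul_span_singleton, ← mul_pow]
    exact Ideal.span_singleton_eq_span_singleton.mpr hassoc
  obtain ⟨f₅, hf₅⟩ := hζ.exists_ringHom_zmod_seven ZMod.isPrimitiveRoot_five_six
  obtain ⟨f₃, hf₃⟩ := hζ.exists_ringHom_zmod_seven ZMod.isPrimitiveRoot_three_six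
  have hπ₁_five : f₅ π₁ = 0 := by
    simp only [hπ₁, hf₅, map_add, map_sub, map_neg, map_pow]; decide
  have hπ₂_three : f₃ π₂ = 0 := by
    simp only [hπ₂, hf₃, map_add, map_sub, map_pow, map_one]; decide
  have hπ₁_three : f₃ π₁ ≠ 0 := by
    simp only [hπ₁, hf₃, map_add, map_sub, map_neg, map_pow]; decide
  have : Fact (Nat.Prime 7) := ⟨by norm_num⟩
  have hrank : Module.finrank ℤ (𝓞 K) = 2 * 6 := by
    rw [RingOfIntegers.rank, IsCyclotomicExtension.Rat.finrank 42 K]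
    rfl
  obtain ⟨hnorm₁, hnorm₂⟩ := Ideal.absNorm_eq_of_span_natCast_eq_pow_mul_pow (p := 7)
    (by norm_num) (by norm_num) hrank (by exact_mod_cast hspan)
    (Ideal.absNorm_span_singleton_ne_one_of_map_eq_zero f₅ hπ₁_five)
    (Ideal.absNorm_span_singleton_ne_one_of_map_eq_zero f₃ hπ₂_three)
  exact ⟨Ideal.span_singleton_ne_of_map_eq_zero f₃ hπ₁_three hπ₂_three,
    Ideal.isMaximal_of_prime_absNorm (hnorm₁ ▸ by norm_num),
    Ideal.isMaximal_of_prime_absNorm (hnorm₂ ▸ by norm_num), hspan⟩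
end

section
/- Let ζ be a primitive 42nd root of unity, 𝒪_K the ring of integers of K = ℚ(ζ), and π₁ = −ζ⁸ + ζ⁶ − ζ⁴ + ζ. Then ζ + 2 lies in the ideal (π₁) but not in (π₁)²; that is, v_{(π₁)}(ζ + 2) = 1. -/
/-!
Since `𝓞 K = ℤ[ζ]` and `Φ₄₂ ≡ Φ₆ ^ 6 (mod 7)`, sending `ζ ↦ 5 + ε` defines a ring homomorphism
`𝓞 K → 𝔽₇[ε]`: `5` is a root of `Φ₆` in `𝔽₇`, so `Φ₆(5 + ε) ∈ (ε)` and its sixth power vanishes.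
As `5` is also a root of `-X⁸ + X⁶ - X⁴ + X` in `𝔽₇`, this homomorphism maps `π₁` into `(ε)`,
hence kills `π₁ ^ 2`, but it sends `ζ + 2` to `ε ≠ 0`. Membership in `(π₁)` is an explicit
factorisation modulo `Φ₄₂`.
-/

open NumberField Polynomial DualNumber TrivSqZeroExt

theorem IsPrimitiveRoot.exists_ringHom_ringOfIntegers {n : ℕ} [NeZero n] {K : Type*} [Field K]
    [CharZero K] [IsCyclotomicExtension {n} ℚ K] {ζ : 𝓞 K} (hζ : IsPrimitiveRoot ζ n)
    {S : Type*} [CommRing S] {y : S} (hy : aeval y (cyclotomic n ℤ) = 0) :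
    ∃ f : 𝓞 K →+* S, f ζ = y := by
  have hζK : IsPrimitiveRoot (ζ : K) n := hζ.map_of_injective RingOfIntegers.coe_injective
  have hgen : hζK.integralPowerBasis.gen = ζ := by
    rw [IsPrimitiveRoot.integralPowerBasis_gen]; rfl
  have hminpoly : minpoly ℤ hζK.integralPowerBasis.gen = cyclotomic n ℤ := by
    rw [hgen, ← RingOfIntegers.minpoly_coe, cyclotomic_eq_minpoly hζK (NeZero.pos n)]
  let f := hζK.integralPowerBasis.lift y (hminpoly ▸ hy)
  exact ⟨f, (congrArg f hgen).symm.trans (hζK.integralPowerBasis.lift_gen y _)⟩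

theorem sq_aeval_inl_add_eps_eq_zero {A : Type*} [CommRing A] {p : A[X]} {a : A}
    (h : p.IsRoot a) : aeval (inl a + ε : A[ε]) p ^ 2 = 0 := by
  obtain ⟨q, rfl⟩ := dvd_iff_isRoot.mpr h
  have hlinear : aeval (inl a + ε : A[ε]) (X - C a) = ε := by
    simp [← algebraMap_eq_inl]
  rw [map_mul, hlinear, mul_pow, sq (ε : A[ε]), eps_mul_eps, zero_mul]

theorem aeval_cyclotomic_mul_inl_add_eps_eq_zero {p n : ℕ} [Fact p.Prime] (hp : p ≠ 2)
    (hn : ¬ p ∣ n) {a : ZMod p} (ha : IsPrimitiveRoot a n) :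
    aeval (inl a + ε : (ZMod p)[ε]) (cyclotomic (n * p) ℤ) = 0 := by
  have hn0 : 0 < n := Nat.pos_of_ne_zero (by rintro rfl; exact hn (dvd_zero p))
  have h2 : 2 ≤ p - 1 := by
    have := (Fact.out : p.Prime).two_le; omega
  rw [← aeval_map_algebraMap (ZMod p), map_cyclotomic,
    cyclotomic_mul_prime_eq_pow_of_not_dvd (ZMod p) hn, map_pow, ← Nat.sub_add_cancel h2,
    pow_add, sq_aeval_inl_add_eps_eq_zero (ha.isRoot_cyclotomic hn0), mul_zero]

theorem notMem_span_singleton_sq_of_ringHom {R S : Type*} [CommRing R] [Semiring S]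
    {π x : R} (f : R →+* S) (hπ : f π ^ 2 = 0) (hx : f x ≠ 0) : x ∉ Ideal.span {π} ^ 2 := by
  rw [Ideal.span_singleton_pow, Ideal.mem_span_singleton]
  rintro ⟨t, rfl⟩
  exact hx (by rw [map_mul, map_pow, hπ, zero_mul])

theorem sq_sub_add_one_eq_zero_of_pow_three_eq_neg_one {R : Type*} [CommRing R]
    [NoZeroDivisors R] {ω : R} (h3 : ω ^ 3 = -1) (h1 : ω ≠ -1) : ω ^ 2 - ω + 1 = 0 := by
  have hfactor : (ω + 1) * (ω ^ 2 - ω + 1) = 0 := by linear_combination h3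
  exact (mul_eq_zero.mp hfactor).resolve_left fun h ↦ h1 (eq_neg_of_add_eq_zero_left h)

theorem IsPrimitiveRoot.cyclotomic_42_relation {R : Type*} [CommRing R] [NoZeroDivisors R]
    {ζ : R} (hζ : IsPrimitiveRoot ζ 42) :
    ζ ^ 12 + ζ ^ 11 - ζ ^ 9 - ζ ^ 8 + ζ ^ 6 - ζ ^ 4 - ζ ^ 3 + ζ + 1 = 0 := by
  have h21 : ζ ^ 21 = -1 :=
    (hζ.pow_of_dvd (by norm_num) (by norm_num : 21 ∣ 42)).eq_neg_one_of_two_right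
  have h7 : ζ ^ 7 ≠ -1 := fun h ↦ hζ.pow_ne_one_of_pos_of_lt (l := 14) (by norm_num)
    (by norm_num) (by rw [show 14 = 7 * 2 from rfl, pow_mul, h]; norm_num)
  have h14 : ζ ^ 14 - ζ ^ 7 + 1 = 0 := by
    linear_combination sq_sub_add_one_eq_zero_of_pow_three_eq_neg_one
      (by rw [← pow_mul, h21]) h7
  have h6 : ζ ^ 2 - ζ + 1 ≠ 0 := fun h ↦ hζ.pow_ne_one_of_pos_of_lt (l := 6) (by norm_num)
    (by norm_num) (by linear_combination (ζ ^ 4 + ζ ^ 3 - ζ - 1) * h)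
  have hfactor : (ζ ^ 2 - ζ + 1) *
      (ζ ^ 12 + ζ ^ 11 - ζ ^ 9 - ζ ^ 8 + ζ ^ 6 - ζ ^ 4 - ζ ^ 3 + ζ + 1) = 0 := by
    linear_combination h14
  exact (mul_eq_zero.mp hfactor).resolve_left h6

theorem valuation_of_zeta_add_two_eq_one
    (K : Type*) [Field K] [NumberField K]
    [IsCyclotomicExtension {(42 : ℕ)} ℚ K]
    (ζ : 𝓞 K) (hζ : IsPrimitiveRoot ζ 42)
    (π₁ : 𝓞 K) (hπ₁ : π₁ = -ζ ^ 8 + ζ ^ 6 - ζ ^ 4 + ζ) :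
    ζ + 2 ∈ Ideal.span {π₁} ∧ ζ + 2 ∉ Ideal.span {π₁} ^ 2 := by
  have hdvd : ζ + 2 = π₁ * (ζ + ζ ^ 2 - ζ ^ 5 + ζ ^ 7 + ζ ^ 8 + ζ ^ 9 + ζ ^ 10) := by
    rw [hπ₁]
    linear_combination (2 - ζ + ζ ^ 3 + ζ ^ 6) * hζ.cyclotomic_42_relation
  refine ⟨Ideal.mem_span_singleton.mpr ⟨_, hdvd⟩, ?_⟩
  have h5 : IsPrimitiveRoot (5 : ZMod 7) 6 :=
    .mk_of_lt _ (by norm_num) (by decide) fun l _ hl ↦ by interval_cases l <;> decide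
  have hroot : aeval (inl 5 + ε : (ZMod 7)[ε]) (cyclotomic (6 * 7) ℤ) = 0 :=
    have : Fact (Nat.Prime 7) := ⟨by norm_num⟩
    aeval_cyclotomic_mul_inl_add_eps_eq_zero (by norm_num) (by norm_num) h5
  obtain ⟨f, hf⟩ := hζ.exists_ringHom_ringOfIntegers hroot
  refine notMem_span_singleton_sq_of_ringHom f ?_ ?_
  · have hπ : f π₁ =
        aeval (inl 5 + ε : (ZMod 7)[ε]) (-X ^ 8 + X ^ 6 - X ^ 4 + X : (ZMod 7)[X]) := by
      simp [hπ₁, hf]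
    rw [hπ]
    refine sq_aeval_inl_add_eps_eq_zero ?_
    simp only [IsRoot, eval_add, eval_sub, eval_neg, eval_pow, eval_X]
    decide
  · have h2 : (2 : (ZMod 7)[ε]) = inl 2 := by rw [← algebraMap_eq_inl, map_ofNat]
    have hε : f (ζ + 2) = ε := by
      rw [map_add, hf, map_ofNat, h2, add_right_comm, ← inl_add,
        show (5 + 2 : ZMod 7) = 0 from rfl, inl_zero, zero_add]
    rw [hε]
    exact fun h ↦ absurd (congrArg snd h) (by decide)
end

section
/- There exist γ₁, γ₂ in the field ℚ₇ of 7-adic numbers such that γ₁² + 13γ₁ + 49 = 0, γ₂² + 13γ₂ + 49 = 0, ‖γ₁‖ = 1 and ‖γ₂‖ = 7⁻²; that is, the polynomial t² + 13t + 49 splits over ℚ₇ with one root of 7-adic valuation 0 and one root of 7-adic valuation 2. -/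
/-!
Modulo 7, `t = 1` is a simple root of `t² + 13t + 49` (the value is `63`, the derivative `15`),
so Hensel's lemma lifts it to a root `γ₁ ≡ 1`, a unit. By Vieta the other root satisfies
`γ₁ γ₂ = 49`, hence `‖γ₂‖ = ‖49‖ = 7⁻²`.
-/

instance : Fact (Nat.Prime 7) := ⟨by norm_num⟩

open Polynomial in
theorem PadicInt.exists_root_quadratic_of_simple_root_mod {p : ℕ} [Fact p.Prime] (b c a : ℤ)
    (hroot : (p : ℤ) ∣ a ^ 2 + b * a + c) (hsimple : IsCoprime (2 * a + b) p) :
    ∃ z : ℤ_[p], z ^ 2 + b * z + c = 0 ∧ ‖z - a‖ < 1 := by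
  set F : ℤ_[p][X] := X ^ 2 + C (b : ℤ_[p]) * X + C (c : ℤ_[p])
  have hF : F.aeval (a : ℤ_[p]) = ((a ^ 2 + b * a + c : ℤ) : ℤ_[p]) := by
    simp [F]
  have hF' : F.derivative.aeval (a : ℤ_[p]) = ((2 * a + b : ℤ) : ℤ_[p]) := by
    simp [F, one_add_one_eq_two]
  have hF'_norm : ‖F.derivative.aeval (a : ℤ_[p])‖ = 1 := by
    rw [hF', PadicInt.norm_intCast_eq_one_iff]
    exact hsimple
  obtain ⟨z, hz, hza, -, -⟩ := hensels_lemma (F := F) (a := a) <| by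
    rw [hF'_norm, one_pow, hF, PadicInt.norm_intCast_lt_one_iff]
    exact hroot
  exact ⟨z, by simpa [F] using hz, hF'_norm ▸ hza⟩

theorem elliptic_points_quadratic_splits_over_Q7 :
    ∃ γ₁ γ₂ : ℚ_[7],
      γ₁ ^ 2 + 13 * γ₁ + 49 = 0 ∧
      γ₂ ^ 2 + 13 * γ₂ + 49 = 0 ∧
      ‖γ₁‖ = 1 ∧
      ‖γ₂‖ = (7 : ℝ) ^ (-2 : ℤ) := by
  obtain ⟨z, hz, hz1⟩ :=
    PadicInt.exists_root_quadratic_of_simple_root_mod (p := 7) 13 49 1 (by norm_num)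
      (by rw [Int.isCoprime_iff_gcd_eq_one]; rfl)
  simp only [Int.cast_ofNat, Int.cast_one] at hz hz1
  have hz_norm : ‖z‖ = 1 := by
    simpa using PadicInt.norm_eq_of_norm_add_lt_right (z1 := z) (z2 := -1)
      (by rwa [← sub_eq_add_neg, norm_neg, norm_one])
  have hz' : (z : ℚ_[7]) ^ 2 + 13 * z + 49 = 0 := by
    exact_mod_cast congrArg ((↑) : ℤ_[7] → ℚ_[7]) hz
  obtain ⟨w, hw, -, hzw⟩ := vieta_formula_quadratic (b := -13) (c := 49) (x := (z : ℚ_[7]))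
    (by linear_combination hz')
  refine ⟨z, w, by linear_combination hz', by linear_combination hw, by simpa using hz_norm, ?_⟩
  calc ‖w‖ = ‖(z : ℚ_[7]) * w‖ := by
        rw [norm_mul, PadicInt.padic_norm_e_of_padicInt, hz_norm, one_mul]
    _ = ‖((7 : ℕ) : ℚ_[7]) ^ 2‖ := by rw [hzw]; norm_num
    _ = (7 : ℝ) ^ (-2 : ℤ) := by rw [Padic.norm_p_pow]; norm_num
end

section
/- Let F be a field of characteristic zero and γ ∈ F with γ² + 13γ + 49 = 0. Then in F[x] one has the identity x⁸ − 7γx⁵(x² + 5x + 7) − γ²x(x⁶ + 7x⁵ + 21x⁴ + 49x³ + 147x² + 343x + 343) = x·(x − (γ + 7))·(x² + ((7γ + 56)/3)x + (7γ + 49))³. -/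
open Polynomial

theorem pi_one_fiber_over_elliptic_point (F : Type*) [Field F] [CharZero F]
    (γ : F) (hγ : γ ^ 2 + 13 * γ + 49 = 0) :
    (X : F[X]) ^ 8 - C (7 * γ) * X ^ 5 * (X ^ 2 + 5 * X + 7) -
        C (γ ^ 2) * X *
          (X ^ 6 + 7 * X ^ 5 + 21 * X ^ 4 + 49 * X ^ 3 + 147 * X ^ 2 + 343 * X + 343) =
      X * (X - C (γ + 7)) *
        (X ^ 2 + C ((7 * γ + 56) / 3) * X + C (7 * γ + 49)) ^ 3 := by
  apply Polynomial.funext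
  intro z
  simp only [eval_mul, eval_add, eval_sub, eval_pow, eval_C, eval_X, eval_ofNat]
  linear_combination (γ ^ 2 * (343 / 27 * z ^ 4 + 343 / 3 * z ^ 3 + 343 * z ^ 2 + 343 * z) +
    γ * (98 / 27 * z ^ 5 + 637 / 3 * z ^ 4 + 5243 / 3 * z ^ 3 + 5145 * z ^ 2 + 5145 * z) +
    (-z ^ 7 - 49 / 3 * z ^ 6 - 2009 / 27 * z ^ 5 + 14063 / 27 * z ^ 4 + 16807 / 3 * z ^ 3 +
      16807 * z ^ 2 + 16807 * z)) * hγ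
end

section
/- Let F be a field of characteristic zero and γ ∈ F with γ² + 13γ + 49 = 0. Then in F[x] one has the identity γ² − 7γx(x² + 5x + 7) − x(x⁶ + 7x⁵ + 21x⁴ + 49x³ + 147x² + 343x + 343) = −(x − (γ + 7))·(x² + ((γ + 14)/3)x + (γ + 7))³. -/
open Polynomial

theorem pi_seven_fiber_over_elliptic_point (F : Type*) [Field F] [CharZero F]
    (γ : F) (hγ : γ ^ 2 + 13 * γ + 49 = 0) :
    C (γ ^ 2) - C (7 * γ) * X * ((X : F[X]) ^ 2 + 5 * X + 7) -
        X * (X ^ 6 + 7 * X ^ 5 + 21 * X ^ 4 + 49 * X ^ 3 + 147 * X ^ 2 + 343 * X + 343) =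
      -((X - C (γ + 7)) * (X ^ 2 + C ((γ + 14) / 3) * X + C (γ + 7)) ^ 3) := by
  apply Polynomial.funext
  intro z
  simp only [eval_sub, eval_add, eval_mul, eval_neg, eval_pow, eval_C, eval_X, eval_ofNat]
  linear_combination (-(49 + 15*γ + γ^2) - z*(98 + 21*γ + γ^2)
    - z^2*(238 + 35*γ + γ^2)/3 - z^3*(896 + 81*γ + γ^2)/27
    - z^4*(196 + 8*γ)/27 - z^5*2/3) * hγ
end

section
/- Let ζ be a primitive 42nd root of unity, 𝒪_K the ring of integers of K = ℚ(ζ), and π₁ = −ζ⁸ + ζ⁶ − ζ⁴ + ζ. Then 3ζ⁷ − 8 lies in (π₁)¹² but not in (π₁)¹³, and 3ζ⁷ − 1 lies in (π₁)⁶ but not in (π₁)⁷; that is, v_{(π₁)}(3ζ⁷ − 8) = 12 and v_{(π₁)}(3ζ⁷ − 1) = 6. -/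
/-!
Put `β = ζ ^ 7`, a primitive sixth root of unity, so `β ^ 2 = β - 1`. Then `3β - 8 = (3β - 1) ^ 2`,
and `3β - 1 = π₁ ^ 6 * c` for an explicit unit `c` of `ℤ[ζ]`, so everything reduces to `π₁` not
being a unit. Complex conjugation maps `β` to `β⁻¹ = 1 - β`, hence `3β - 1` to `2 - 3β`, and
`(3β - 1)(2 - 3β) = 7`: if `π₁`, hence `3β - 1`, were a unit, then so would be `7`.
-/

open NumberField Polynomial

theorem Polynomial.cyclotomic_fortyTwo (R : Type*) [Ring R] :
    cyclotomic 42 R = X ^ 12 + X ^ 11 - X ^ 9 - X ^ 8 + X ^ 6 - X ^ 4 - X ^ 3 + X + 1 := by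
  suffices cyclotomic 42 ℤ = X ^ 12 + X ^ 11 - X ^ 9 - X ^ 8 + X ^ 6 - X ^ 4 - X ^ 3 + X + 1 by
    rw [← map_cyclotomic_int, this]
    simp
  apply mul_right_cancel₀ (cyclotomic_ne_zero 6 ℤ)
  rw [show 42 = 6 * 7 by rfl, ← cyclotomic_expand_eq_cyclotomic_mul Nat.prime_seven (by norm_num)]
  simp only [cyclotomic_six, map_add, map_sub, map_pow, expand_X, map_one]
  ring

theorem Ideal.mem_span_singleton_pow_and_notMem_succ_of_associated {R : Type*} [CommRing R]
    [IsDomain R] {π x : R} (hπ : ¬IsUnit π) (hπ0 : π ≠ 0) {n : ℕ} (hx : Associated (π ^ n) x) :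
    x ∈ Ideal.span {π} ^ n ∧ x ∉ Ideal.span {π} ^ (n + 1) := by
  simp only [Ideal.span_singleton_pow, Ideal.mem_span_singleton]
  refine ⟨hx.dvd, fun hdvd => hπ ?_⟩
  obtain ⟨c, rfl⟩ := hx
  rw [pow_succ, mul_dvd_mul_iff_left (pow_ne_zero n hπ0)] at hdvd
  exact isUnit_of_dvd_unit hdvd c.isUnit

theorem NumberField.IsCMField.ringOfIntegersComplexConj_mul_self_of_isPrimitiveRoot
    {K : Type*} [Field K] [NumberField K] [IsCMField K] {ζ : 𝓞 K} {n : ℕ}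
    (hζ : IsPrimitiveRoot ζ n) (hn : n ≠ 0) : IsCMField.ringOfIntegersComplexConj K ζ * ζ = 1 := by
  have hu := hζ.isUnit hn
  have hconj := IsCMField.complexConj_torsion K
    ⟨hu.unit, (CommGroup.mem_torsion _).mpr
      (Units.isOfFinOrder_val.mp (by simpa using hζ.isOfFinOrder hn))⟩
  apply RingOfIntegers.ext
  simp only [IsUnit.unit_spec] at hconj
  simp [hconj, hζ.ne_zero hn]

namespace IsPrimitiveRoot

section Domain

variable {R : Type*} [CommRing R] [IsDomain R] {ζ : R}

theorem cyclotomic_fortyTwo_eval_eq_zero (hζ : IsPrimitiveRoot ζ 42) :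
    ζ ^ 12 + ζ ^ 11 - ζ ^ 9 - ζ ^ 8 + ζ ^ 6 - ζ ^ 4 - ζ ^ 3 + ζ + 1 = 0 := by
  simpa [cyclotomic_fortyTwo] using (hζ.isRoot_cyclotomic (by norm_num)).eq_zero

theorem pow_seven_sq_sub_pow_seven_add_one_eq_zero (hζ : IsPrimitiveRoot ζ 42) :
    (ζ ^ 7) ^ 2 - ζ ^ 7 + 1 = 0 := by
  linear_combination (ζ ^ 2 - ζ + 1) * hζ.cyclotomic_fortyTwo_eval_eq_zero

theorem three_mul_pow_seven_sub_one_ne_zero [CharZero R] (hζ : IsPrimitiveRoot ζ 42) :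
    3 * ζ ^ 7 - 1 ≠ 0 := by
  intro h
  have h7 : (7 : R) = 0 := by
    linear_combination 9 * hζ.pow_seven_sq_sub_pow_seven_add_one_eq_zero - (3 * ζ ^ 7 - 2) * h
  norm_num at h7

/- The unit is `(3ζ⁷ - 1) / π₁⁶` and its inverse is `π₁⁶ / (3ζ⁷ - 1)`, both reduced modulo `Φ₄₂`;
the multipliers of `Φ₄₂(ζ)` are the quotients of the corresponding polynomial divisions. -/
theorem associated_pow_six_three_mul_pow_seven_sub_one (hζ : IsPrimitiveRoot ζ 42) :
    Associated ((-ζ ^ 8 + ζ ^ 6 - ζ ^ 4 + ζ) ^ 6) (3 * ζ ^ 7 - 1) := by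
  have hΦ := hζ.cyclotomic_fortyTwo_eval_eq_zero
  have hunit : (7 + 14 * ζ + 12 * ζ ^ 2 - ζ ^ 3 - 16 * ζ ^ 4 - 18 * ζ ^ 5 - 3 * ζ ^ 6 +
      12 * ζ ^ 7 + 16 * ζ ^ 8 + 9 * ζ ^ 9 - 2 * ζ ^ 11) *
      (34 + 31 * ζ - 36 * ζ ^ 2 - 59 * ζ ^ 3 + 9 * ζ ^ 4 + 54 * ζ ^ 5 + 17 * ζ ^ 6 -
      54 * ζ ^ 7 - 43 * ζ ^ 8 + 25 * ζ ^ 9 + 36 * ζ ^ 10 + 3 * ζ ^ 11) = 1 := by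
    linear_combination (237 + 456 * ζ + 134 * ζ ^ 2 - 476 * ζ ^ 3 - 601 * ζ ^ 4 - 85 * ζ ^ 5 +
      464 * ζ ^ 6 + 409 * ζ ^ 7 + 43 * ζ ^ 8 - 66 * ζ ^ 9 - 6 * ζ ^ 10) * hΦ
  refine ⟨Units.mkOfMulEqOne _ _ hunit, ?_⟩
  rw [Units.val_mkOfMulEqOne]
  linear_combination (1 - ζ + ζ ^ 2 + 7 * ζ ^ 6 + 5 * ζ ^ 7 + 7 * ζ ^ 8 - 43 * ζ ^ 9 -
    45 * ζ ^ 10 + 9 * ζ ^ 11 + 140 * ζ ^ 12 + 115 * ζ ^ 13 - 148 * ζ ^ 14 - 364 * ζ ^ 15 -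
    63 * ζ ^ 16 + 528 * ζ ^ 17 + 576 * ζ ^ 18 - 387 * ζ ^ 19 - 1086 * ζ ^ 20 - 251 * ζ ^ 21 +
    1251 * ζ ^ 22 + 1140 * ζ ^ 23 - 805 * ζ ^ 24 - 1825 * ζ ^ 25 - 104 * ζ ^ 26 +
    1864 * ζ ^ 27 + 1084 * ζ ^ 28 - 1288 * ζ ^ 29 - 1645 * ζ ^ 30 + 443 * ζ ^ 31 +
    1618 * ζ ^ 32 + 256 * ζ ^ 33 - 1154 * ζ ^ 34 - 601 * ζ ^ 35 + 611 * ζ ^ 36 +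
    601 * ζ ^ 37 - 229 * ζ ^ 38 - 420 * ζ ^ 39 + 50 * ζ ^ 40 + 214 * ζ ^ 41 + ζ ^ 42 -
    79 * ζ ^ 43 - 5 * ζ ^ 44 + 19 * ζ ^ 45 + 2 * ζ ^ 46 - 2 * ζ ^ 47) * hΦ

end Domain

theorem not_isUnit_three_mul_pow_seven_sub_one {K : Type*} [Field K] [NumberField K]
    [IsCyclotomicExtension {(42 : ℕ)} ℚ K] {ζ : 𝓞 K} (hζ : IsPrimitiveRoot ζ 42) :
    ¬IsUnit (3 * ζ ^ 7 - 1) := by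
  have : IsCMField K := IsCyclotomicExtension.Rat.isCMField K (S := {42}) ⟨42, rfl, by norm_num⟩
  set σ := IsCMField.ringOfIntegersComplexConj K
  have hβ := hζ.pow_seven_sq_sub_pow_seven_add_one_eq_zero
  have hσβ : σ (ζ ^ 7) = 1 - ζ ^ 7 := by
    have hσζ := IsCMField.ringOfIntegersComplexConj_mul_self_of_isPrimitiveRoot hζ (by norm_num)
    have hσβ_mul : σ (ζ ^ 7) * ζ ^ 7 = 1 := by rw [map_pow, ← mul_pow, hσζ, one_pow]
    linear_combination (1 - ζ ^ 7) * hσβ_mul + σ (ζ ^ 7) * hβ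
  have hnorm : (3 * ζ ^ 7 - 1) * σ (3 * ζ ^ 7 - 1) = 7 := by
    rw [map_sub, map_mul, hσβ, map_one, map_ofNat]
    linear_combination (-9) * hβ
  have h7 : ¬IsUnit (7 : 𝓞 K) := by
    rw [← map_ofNat (algebraMap ℤ (𝓞 K)) 7, isUnit_map_iff, Int.isUnit_iff]
    decide
  exact fun hu => h7 (hnorm ▸ hu.mul (hu.map σ))

end IsPrimitiveRoot

theorem valuations_of_elliptic_point_coordinates
    (K : Type*) [Field K] [NumberField K]
    [IsCyclotomicExtension {(42 : ℕ)} ℚ K]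
    (ζ : 𝓞 K) (hζ : IsPrimitiveRoot ζ 42)
    (π₁ : 𝓞 K) (hπ₁ : π₁ = -ζ ^ 8 + ζ ^ 6 - ζ ^ 4 + ζ) :
    (3 * ζ ^ 7 - 8 ∈ Ideal.span {π₁} ^ 12 ∧ 3 * ζ ^ 7 - 8 ∉ Ideal.span {π₁} ^ 13) ∧
    (3 * ζ ^ 7 - 1 ∈ Ideal.span {π₁} ^ 6 ∧ 3 * ζ ^ 7 - 1 ∉ Ideal.span {π₁} ^ 7) := by
  have hassoc : Associated (π₁ ^ 6) (3 * ζ ^ 7 - 1) :=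
    hπ₁ ▸ hζ.associated_pow_six_three_mul_pow_seven_sub_one
  have hπ₁_unit : ¬IsUnit π₁ := fun h =>
    hζ.not_isUnit_three_mul_pow_seven_sub_one (hassoc.isUnit_iff.mp (h.pow 6))
  have hπ₁_ne : π₁ ≠ 0 := (pow_ne_zero_iff (n := 6) (by norm_num)).mp
    (hassoc.ne_zero_iff.mpr hζ.three_mul_pow_seven_sub_one_ne_zero)
  have hsq : 3 * ζ ^ 7 - 8 = (3 * ζ ^ 7 - 1) ^ 2 := by
    linear_combination (-9) * hζ.pow_seven_sq_sub_pow_seven_add_one_eq_zero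
  refine ⟨?_, Ideal.mem_span_singleton_pow_and_notMem_succ_of_associated hπ₁_unit hπ₁_ne hassoc⟩
  rw [hsq]
  exact Ideal.mem_span_singleton_pow_and_notMem_succ_of_associated hπ₁_unit hπ₁_ne
    (by simpa [← pow_mul] using hassoc.pow_pow (n := 2))
end

section
/- Let P(x) = 1849x¹² + 35336x¹¹ + 293356x¹⁰ + 1345736x⁹ + 3511340x⁸ + 4649708x⁷ + 4436705x⁶ + 32547956x⁵ + 172055660x⁴ + 461587448x³ + 704347756x² + 593892152x + 217533001 ∈ ℤ[x]. Then the 7-adic valuation of the leading coefficient 1849 is 0, the 7-adic valuation of the constant term 217533001 is 6, and for every 0 ≤ i ≤ 12 the coefficient aᵢ of xⁱ satisfies 2·v₇(aᵢ) ≥ 12 − i. Consequently, the 7-adic Newton polygon of P is the straight segment of slope 1/2, so every root of P in any finite extension of ℚ₇ (with the unique extension of the 7-adic valuation) has valuation exactly 1/2. -/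
open Polynomial

/-! In an ultrametric field a sum with one term strictly larger in norm than all the others
cannot vanish. The 7-adic valuations of the coefficients `aᵢ` of `P` lie on or above the segment
from `(0, 6)` to `(12, 0)`, so for a root `x` the term `aᵢ xⁱ` has norm at most
`7 ^ (-(12 - i) / 2) * ‖x‖ ^ i`, with equality for `i = 0` and `i = 12`. If `‖x‖ > 7 ^ (-1/2)` the
leading term dominates, and if `‖x‖ < 7 ^ (-1/2)` the constant term does. -/

namespace IsUltrametricDist

lemma norm_sum_eq_of_forall_norm_lt {ι M : Type*} [SeminormedAddCommGroup M] [IsUltrametricDist M]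
    {s : Finset ι} {f : ι → M} {i : ι} (hi : i ∈ s) (h : ∀ j ∈ s, j ≠ i → ‖f j‖ < ‖f i‖) :
    ‖∑ j ∈ s, f j‖ = ‖f i‖ := by
  classical
  rw [← Finset.add_sum_erase s f hi]
  rcases (s.erase i).eq_empty_or_nonempty with hs | hs
  · simp [hs]
  obtain ⟨j, hj, hle⟩ := exists_norm_finsetSum_le_of_nonempty hs f
  have hlt : ‖∑ j ∈ s.erase i, f j‖ < ‖f i‖ :=
    hle.trans_lt (h j (Finset.mem_of_mem_erase hj) (Finset.ne_of_mem_erase hj))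
  rw [norm_add_eq_max_of_norm_ne_norm hlt.ne', max_eq_left hlt.le]

lemma of_norm_algebraMap {K L : Type*} [NormedField K] [IsUltrametricDist K] [NormedField L]
    [Algebra K L] (h : ∀ a : K, ‖algebraMap K L a‖ = ‖a‖) : IsUltrametricDist L :=
  isUltrametricDist_of_forall_norm_natCast_le_one fun n ↦ by
    rw [← map_natCast (algebraMap K L), h]
    exact norm_natCast_le_one K n

end IsUltrametricDist

theorem Polynomial.norm_eq_of_isRoot_of_norm_coeff_le {L : Type*} [NormedField L]
    [IsUltrametricDist L] {f : L[X]} {r : ℝ} (hr : 0 < r) (hpos : 0 < f.natDegree)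
    (hcoeff : ∀ i ≤ f.natDegree, ‖f.coeff i‖ ≤ r ^ (f.natDegree - i) * ‖f.leadingCoeff‖)
    (hconst : ‖f.coeff 0‖ = r ^ f.natDegree * ‖f.leadingCoeff‖) {x : L} (hx : f.IsRoot x) :
    ‖x‖ = r := by
  set n := f.natDegree
  have hlc : 0 < ‖f.leadingCoeff‖ :=
    norm_pos_iff.2 (leadingCoeff_ne_zero.2 (ne_zero_of_natDegree_gt hpos))
  have hterm (i : ℕ) (hi : i ≤ n) :
      ‖f.coeff i * x ^ i‖ ≤ r ^ (n - i) * ‖x‖ ^ i * ‖f.leadingCoeff‖ := by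
    rw [norm_mul, norm_pow, mul_right_comm]
    exact mul_le_mul_of_nonneg_right (hcoeff i hi) (by positivity)
  have hdominant (i : ℕ) (hi : i ≤ n)
      (h : ∀ j ≤ n, j ≠ i → ‖f.coeff j * x ^ j‖ < ‖f.coeff i * x ^ i‖) :
      ‖f.coeff i * x ^ i‖ = 0 := by
    rw [← norm_zero (E := L), ← hx.eq_zero, eval_eq_sum_range]
    exact (IsUltrametricDist.norm_sum_eq_of_forall_norm_lt (f := fun j ↦ f.coeff j * x ^ j)
      (Finset.mem_range_succ_iff.2 hi) fun j hj ↦ h j (Finset.mem_range_succ_iff.1 hj)).symm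
  by_contra hne
  rcases Ne.lt_or_gt hne with hlt | hgt
  · refine (mul_pos (pow_pos hr n) hlc).ne' ?_
    rw [← hconst, ← mul_one (f.coeff 0), ← pow_zero x]
    refine hdominant 0 n.zero_le fun j hjn hj0 ↦ ?_
    calc ‖f.coeff j * x ^ j‖ ≤ r ^ (n - j) * ‖x‖ ^ j * ‖f.leadingCoeff‖ := hterm j hjn
      _ < r ^ (n - j) * r ^ j * ‖f.leadingCoeff‖ := by
        gcongr
      _ = ‖f.coeff 0 * x ^ 0‖ := by
        rw [← pow_add, Nat.sub_add_cancel hjn, pow_zero, mul_one, hconst]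
  · have hx0 : 0 < ‖x‖ := hr.trans hgt
    refine (mul_pos hlc (pow_pos hx0 n)).ne' ?_
    rw [← norm_pow, ← norm_mul]
    refine hdominant n le_rfl fun j hjn hj ↦ ?_
    calc ‖f.coeff j * x ^ j‖ ≤ r ^ (n - j) * ‖x‖ ^ j * ‖f.leadingCoeff‖ := hterm j hjn
      _ < ‖x‖ ^ (n - j) * ‖x‖ ^ j * ‖f.leadingCoeff‖ := by
        gcongr
        exact Nat.sub_ne_zero_of_lt (hjn.lt_of_ne hj)
      _ = ‖f.leadingCoeff * x ^ n‖ := by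
        rw [← pow_add, Nat.sub_add_cancel hjn, norm_mul, norm_pow, mul_comm]

section Padic

variable {p : ℕ} [Fact p.Prime]

lemma le_padicValInt_of_pow_dvd {z : ℤ} {k : ℕ} (hz : z ≠ 0) (h : (p : ℤ) ^ k ∣ z) :
    k ≤ padicValInt p z :=
  ((padicValInt_dvd_iff k z).1 h).resolve_left hz

lemma padicValInt_eq_of_pow_dvd_of_not_pow_succ_dvd {z : ℤ} {k : ℕ} (h : (p : ℤ) ^ k ∣ z)
    (h' : ¬(p : ℤ) ^ (k + 1) ∣ z) : padicValInt p z = k := by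
  have hz : z ≠ 0 := by
    rintro rfl
    exact h' (dvd_zero _)
  have hlt : ¬k + 1 ≤ padicValInt p z := fun hk ↦ h' ((padicValInt_dvd_iff _ z).2 (Or.inr hk))
  have hle := le_padicValInt_of_pow_dvd hz h
  omega

variable {L : Type*} [NormedField L] [Algebra ℚ_[p] L]

lemma norm_intCast_eq_rpow_neg_padicValInt (hL : ∀ a : ℚ_[p], ‖algebraMap ℚ_[p] L a‖ = ‖a‖)
    {z : ℤ} (hz : z ≠ 0) : ‖(z : L)‖ = (p : ℝ) ^ (-(padicValInt p z : ℝ)) := by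
  rw [← map_intCast (algebraMap ℚ_[p] L), hL,
    Padic.norm_eq_zpow_neg_valuation (Int.cast_ne_zero.2 hz), Padic.valuation_intCast,
    ← Real.rpow_intCast]
  push_cast
  rfl

theorem norm_eq_of_aeval_eq_zero_of_padicValInt_coeff
    (hL : ∀ a : ℚ_[p], ‖algebraMap ℚ_[p] L a‖ = ‖a‖) {P : ℤ[X]} {n : ℕ} {s : ℝ}
    (hdeg : P.natDegree = n) (hn : 0 < n) (hlead : padicValInt p (P.coeff n) = 0)
    (hconst : P.coeff 0 ≠ 0) (hconst_val : (padicValInt p (P.coeff 0) : ℝ) = n * s)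
    (hcoeff : ∀ i ≤ n, P.coeff i ≠ 0 → (n - i : ℝ) * s ≤ padicValInt p (P.coeff i))
    {x : L} (hx : aeval x P = 0) : ‖x‖ = (p : ℝ) ^ (-s) := by
  have := IsUltrametricDist.of_norm_algebraMap hL
  have : CharZero L := charZero_of_injective_algebraMap (algebraMap ℚ_[p] L).injective
  have hp : (1 : ℝ) ≤ p := Nat.one_le_cast.2 (Fact.out : p.Prime).one_le
  set f := P.map (algebraMap ℤ L)
  have hcoeff_map (i : ℕ) : f.coeff i = (P.coeff i : L) := by
    rw [coeff_map, eq_intCast]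
  have hfdeg : f.natDegree = n := by
    rw [natDegree_map_eq_of_injective (RingHom.injective_int _), hdeg]
  have hlc : ‖f.leadingCoeff‖ = 1 := by
    have hPn : P.coeff n ≠ 0 := by
      rw [← hdeg]
      exact leadingCoeff_ne_zero.2 (ne_zero_of_natDegree_gt (hdeg ▸ hn))
    rw [leadingCoeff, hfdeg, hcoeff_map, norm_intCast_eq_rpow_neg_padicValInt hL hPn, hlead]
    simp
  have hpow (k : ℕ) : ((p : ℝ) ^ (-s)) ^ k = (p : ℝ) ^ (-(k * s)) := by
    rw [← Real.rpow_natCast, ← Real.rpow_mul (Nat.cast_nonneg p), neg_mul, mul_comm]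
  refine norm_eq_of_isRoot_of_norm_coeff_le (by positivity) (hfdeg ▸ hn) (fun i hi ↦ ?_) ?_
    (by rwa [IsRoot, eval_map_algebraMap])
  · rw [hfdeg] at hi ⊢
    rw [hlc, mul_one, hcoeff_map]
    by_cases hi0 : P.coeff i = 0
    · rw [hi0, Int.cast_zero, norm_zero]
      positivity
    rw [norm_intCast_eq_rpow_neg_padicValInt hL hi0, hpow, Nat.cast_sub hi]
    exact Real.rpow_le_rpow_of_exponent_le hp (neg_le_neg (hcoeff i hi hi0))
  · rw [hlc, mul_one, hcoeff_map, hfdeg, norm_intCast_eq_rpow_neg_padicValInt hL hconst, hpow,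
      hconst_val]

end Padic

theorem newton_polygon_of_minimal_polynomial_of_xQ
    (P : ℤ[X])
    (hP : P = 1849 * X ^ 12 + 35336 * X ^ 11 + 293356 * X ^ 10 +
      1345736 * X ^ 9 + 3511340 * X ^ 8 + 4649708 * X ^ 7 +
      4436705 * X ^ 6 + 32547956 * X ^ 5 + 172055660 * X ^ 4 +
      461587448 * X ^ 3 + 704347756 * X ^ 2 + 593892152 * X + 217533001) :
    padicValInt 7 (P.coeff 12) = 0 ∧
    padicValInt 7 (P.coeff 0) = 6 ∧
    (∀ i : ℕ, i ≤ 12 → 12 - i ≤ 2 * padicValInt 7 (P.coeff i)) ∧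
    ∀ (L : Type) [NormedField L] [Algebra ℚ_[7] L]
      [FiniteDimensional ℚ_[7] L],
      (∀ a : ℚ_[7], ‖algebraMap ℚ_[7] L a‖ = ‖a‖) →
      ∀ x : L, Polynomial.aeval x P = 0 → ‖x‖ = (7 : ℝ) ^ (-(1 / 2) : ℝ) := by
  -- `(13 - i) / 2 = ⌈(12 - i) / 2⌉`
  have hdvd : ∀ i ≤ 12, P.coeff i ≠ 0 ∧ (7 : ℤ) ^ ((13 - i) / 2) ∣ P.coeff i := by
    intro i hi
    subst hP
    interval_cases i <;> norm_num [coeff_X_pow, coeff_X]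
  have hlead : padicValInt 7 (P.coeff 12) = 0 := by
    subst hP
    exact padicValInt.eq_zero_of_not_dvd (by norm_num [coeff_X_pow, coeff_X])
  have hconst : padicValInt 7 (P.coeff 0) = 6 := by
    subst hP
    apply padicValInt_eq_of_pow_dvd_of_not_pow_succ_dvd <;> norm_num [coeff_X_pow, coeff_X]
  have hslope (i : ℕ) (hi : i ≤ 12) : 12 - i ≤ 2 * padicValInt 7 (P.coeff i) := by
    have := le_padicValInt_of_pow_dvd (p := 7) (hdvd i hi).1 (hdvd i hi).2
    omega
  refine ⟨hlead, hconst, hslope, fun L _ _ _ hL x hx ↦ ?_⟩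
  have hdeg : P.natDegree = 12 := by
    subst hP
    compute_degree!
  have hslope_real (i : ℕ) (hi : i ≤ 12) (_ : P.coeff i ≠ 0) :
      ((12 : ℕ) - i : ℝ) * (1 / 2) ≤ padicValInt 7 (P.coeff i) := by
    have : ((12 - i : ℕ) : ℝ) ≤ 2 * padicValInt 7 (P.coeff i) := by exact_mod_cast hslope i hi
    rw [Nat.cast_sub hi] at this
    push_cast at this ⊢
    linarith
  have hroot := norm_eq_of_aeval_eq_zero_of_padicValInt_coeff (s := 1 / 2) hL hdeg (by norm_num)
    hlead (hdvd 0 (by norm_num)).1 (by rw [hconst]; norm_num) hslope_real hx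
  simpa using hroot
end
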